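/- arXiv:2403.05677 — 3 statements merged into one kernel-verified Lean document; each statement's English description precedes it below -/
import Mathlib

section
/- Let r ≥ 2 and n ≥ 1 be integers and let N ≥ (2r-1)n + 2. In every r-coloring of the edges of the complete graph on N vertices, either (i) for every pair of integers n1, n2 ≥ 1 with n1 + n2 = 2n there is a monochromatic copy of the double star S_{n1,n2}, or (ii) for every vertex v and every color i, the number of edges of color i incident to v is at least n+1 and at most 2n. -/
/-!
If some color degree lies outside `[n+1, 2n]`, then some vertex `v` has a color `i` of degree
`> 2n`: a degree `≤ n` forces this by pigeonhole, as `N - 1 > n + 2n(r-1)`. It then suffices to find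
an edge `xy` of color `m` with `deg_m x > n` and `deg_m y > 2n`, since both stars of
`S_{n₁,n₂}` (`n₁ ≤ n`) can be grown around it. Suppose there is none and orient every edge
`y → x` whose color has degree `> 2n` at `y`. Its color then has degree `≤ n` at `x`, so the
in-degree of `x` is at most the total degree `S(x)` of `x` in colors of degree `≤ n`, while its
out-degree is the total degree `B(x)` in colors of degree `> 2n`. Counting `N - 1` against the at
most `r - 1` remaining colors gives `S(x) ≤ B(x)`, strictly at `v`, so the in-degrees would sum to
less than the out-degrees.
-/

/-- A monochromatic copy of the double star `S_{k,l}` in an `r`-coloring `c` of the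
edges of the complete graph on `Fin N`. -/
def HasMonoDoubleStar (N r k l : ℕ) (c : Fin N → Fin N → Fin r) : Prop :=
  ∃ (u v : Fin N) (a : Fin k → Fin N) (b : Fin l → Fin N) (col : Fin r),
    u ≠ v ∧ Function.Injective a ∧ Function.Injective b ∧
    (∀ i, a i ≠ u ∧ a i ≠ v) ∧ (∀ j, b j ≠ u ∧ b j ≠ v) ∧
    (∀ i j, a i ≠ b j) ∧
    c u v = col ∧ (∀ i, c u (a i) = col) ∧ (∀ j, c v (b j) = col)

open Finset Fintype

lemma Finset.exists_injective_mem_of_le_card {α : Type*} {s : Finset α} {k : ℕ} (h : k ≤ #s) :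
    ∃ a : Fin k → α, Function.Injective a ∧ ∀ i, a i ∈ s := by
  obtain ⟨e⟩ := Function.Embedding.nonempty_of_card_le (α := Fin k) (β := s) (by simpa using h)
  exact ⟨fun i => e i, Subtype.val_injective.comp e.injective, fun i => (e i).2⟩

section ColorDegree

variable {V κ : Type*} [Fintype V] [DecidableEq V] [Fintype κ] [DecidableEq κ]

def colorDegree (c : V → V → κ) (v : V) (i : κ) : ℕ :=
  #{u | u ≠ v ∧ c v u = i}

lemma card_filter_ne_and_color_eq_sum (c : V → V → κ) (v : V) (P : κ → Prop)
    [DecidablePred P] : #{u | u ≠ v ∧ P (c v u)} = ∑ i with P i, colorDegree c v i := by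
  rw [card_eq_sum_card_fiberwise (f := c v) (t := {i | P i}) fun u hu => by
    simp only [coe_filter, mem_univ, true_and, Set.mem_ofPred_eq] at hu ⊢
    exact hu.2]
  refine sum_congr rfl fun i hi => ?_
  rw [filter_filter, colorDegree]
  congr 1
  refine filter_congr fun u _ => ?_
  simp only [mem_filter, mem_univ, true_and] at hi
  constructor
  · exact fun h => ⟨h.1.1, h.2⟩
  · exact fun h => ⟨⟨h.1, h.2 ▸ hi⟩, h.2⟩

lemma sum_colorDegree (c : V → V → κ) (v : V) :
    ∑ i, colorDegree c v i = card V - 1 := by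
  simpa [filter_ne'] using (card_filter_ne_and_color_eq_sum c v fun _ => True).symm

lemma two_mul_sub_one_mul {k : ℕ} (hk : 1 ≤ k) (n : ℕ) :
    (2 * k - 1) * n = n + (k - 1) * (2 * n) := by
  obtain ⟨k, rfl⟩ := Nat.exists_eq_add_of_le' hk
  simp only [Nat.add_sub_cancel, show 2 * (k + 1) - 1 = 2 * k + 1 by omega]
  ring

variable {n : ℕ} (hN : (2 * card κ - 1) * n + 2 ≤ card V) (c : V → V → κ)
include hN

lemma exists_colorDegree_gt_of_le {v : V} {i₀ : κ} (h : colorDegree c v i₀ ≤ n) :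
    ∃ i, 2 * n < colorDegree c v i := by
  by_contra! hsmall
  have hrest := sum_le_card_nsmul (univ.erase i₀) (fun i => colorDegree c v i) (2 * n)
    fun i _ => hsmall i
  rw [card_erase_of_mem (mem_univ _), card_univ, smul_eq_mul] at hrest
  have hsum := sum_colorDegree c v
  rw [← sum_erase_add _ _ (mem_univ i₀)] at hsum
  have hkey := two_mul_sub_one_mul (card_pos_iff.mpr ⟨i₀⟩) n
  omega

lemma sum_colorDegree_le_lt_sum_colorDegree_gt {v : V} (hv : ∃ i, 2 * n < colorDegree c v i) :
    ∑ i with colorDegree c v i ≤ n, colorDegree c v i <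
      ∑ i with 2 * n < colorDegree c v i, colorDegree c v i := by
  set d := colorDegree c v
  obtain ⟨i₀, hi₀⟩ := hv
  have hcard : #{i | ¬2 * n < d i} ≤ card κ - 1 := by
    have := card_filter_add_card_filter_not (s := univ) fun i => 2 * n < d i
    have : 0 < #{i | 2 * n < d i} := card_pos.mpr ⟨i₀, by simpa using hi₀⟩
    simp only [card_univ] at *
    omega
  -- a small color counts twice, a middle one once, and neither exceeds `2n`
  have hweight : ∑ i with d i ≤ n, d i + ∑ i with ¬2 * n < d i, d i ≤
      ∑ i with ¬2 * n < d i, 2 * n := by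
    simp only [sum_filter, ← sum_add_distrib]
    refine sum_le_sum fun i _ => ?_
    split_ifs <;> omega
  have hsplit := sum_filter_add_sum_filter_not univ (fun i => 2 * n < d i) d
  rw [sum_colorDegree] at hsplit
  have hkey := two_mul_sub_one_mul (card_pos_iff.mpr ⟨i₀⟩) n
  rw [sum_const, smul_eq_mul] at hweight
  have := Nat.mul_le_mul_right (2 * n) hcard
  omega

lemma sum_colorDegree_le_le_sum_colorDegree_gt (v : V) :
    ∑ i with colorDegree c v i ≤ n, colorDegree c v i ≤
      ∑ i with 2 * n < colorDegree c v i, colorDegree c v i := by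
  by_cases hv : ∃ i, 2 * n < colorDegree c v i
  · exact (sum_colorDegree_le_lt_sum_colorDegree_gt hN c hv).le
  · have : ({i | colorDegree c v i ≤ n} : Finset κ) = ∅ :=
      filter_eq_empty_iff.mpr fun _ _ h => hv (exists_colorDegree_gt_of_le hN c h)
    simp [this]

theorem exists_ne_lt_colorDegree_of_lt_colorDegree (hsymm : ∀ u v, c u v = c v u) {v : V} {i : κ}
    (hv : 2 * n < colorDegree c v i) :
    ∃ x y, x ≠ y ∧ n < colorDegree c x (c x y) ∧ 2 * n < colorDegree c y (c x y) := by
  by_contra! hno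
  let Oriented : V → V → Prop := fun y x => x ≠ y ∧ 2 * n < colorDegree c y (c y x)
  have hout (y : V) : #(univ.bipartiteAbove Oriented y) =
      ∑ i with 2 * n < colorDegree c y i, colorDegree c y i :=
    card_filter_ne_and_color_eq_sum c y fun i => 2 * n < colorDegree c y i
  have hin (x : V) : #(univ.bipartiteBelow Oriented x) ≤
      ∑ i with colorDegree c x i ≤ n, colorDegree c x i := by
    rw [← card_filter_ne_and_color_eq_sum c x fun i => colorDegree c x i ≤ n]
    refine card_le_card fun y hy => ?_
    simp only [bipartiteBelow, Oriented, mem_filter, mem_univ, true_and] at hy ⊢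
    refine ⟨hy.1.symm, not_lt.mp fun hx => ?_⟩
    rw [hsymm y x] at hy
    exact (hno x y hy.1 hx).not_gt hy.2
  have hlt : ∑ x, #(univ.bipartiteBelow Oriented x) < ∑ y, #(univ.bipartiteAbove Oriented y) := by
    refine sum_lt_sum (fun x _ => ?_) ⟨v, mem_univ v, ?_⟩
    · exact (hin x).trans ((sum_colorDegree_le_le_sum_colorDegree_gt hN c x).trans (hout x).ge)
    · exact (hin v).trans_lt
        ((sum_colorDegree_le_lt_sum_colorDegree_gt hN c ⟨i, hv⟩).trans_eq (hout v).symm)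
  rw [sum_card_bipartiteAbove_eq_sum_card_bipartiteBelow] at hlt
  exact hlt.false

end ColorDegree

lemma HasMonoDoubleStar.swap {N r k l : ℕ} {c : Fin N → Fin N → Fin r}
    (hsymm : ∀ u v, c u v = c v u) (h : HasMonoDoubleStar N r k l c) :
    HasMonoDoubleStar N r l k c := by
  obtain ⟨u, v, a, b, col, huv, ha, hb, hau, hbv, hab, huvc, hac, hbc⟩ := h
  exact ⟨v, u, b, a, col, huv.symm, hb, ha, fun j => (hbv j).symm, fun i => (hau i).symm,
    fun j i => (hab i j).symm, (hsymm v u).trans huvc, hbc, hac⟩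

lemma hasMonoDoubleStar_of_lt_colorDegree {N r k l : ℕ} {c : Fin N → Fin N → Fin r} {u v : Fin N}
    (huv : u ≠ v) (hu : k < colorDegree c u (c u v)) (hv : k + l < colorDegree c v (c u v)) :
    HasMonoDoubleStar N r k l c := by
  set m := c u v
  obtain ⟨a, ha, haS⟩ := exists_injective_mem_of_le_card (k := k)
    (s := ({w | w ≠ u ∧ c u w = m} : Finset (Fin N)).erase v)
    ((Nat.le_sub_one_of_lt hu).trans pred_card_le_card_erase)
  have hcard_b : l ≤ #((({w | w ≠ v ∧ c v w = m} : Finset (Fin N)).erase u) \ univ.image a) := by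
    have := (le_card_sdiff (univ.image a) _).trans' (Nat.sub_le_sub_right
      (pred_card_le_card_erase (s := ({w | w ≠ v ∧ c v w = m} : Finset (Fin N))) (a := u))
      #(univ.image a))
    rw [card_image_of_injective _ ha, card_univ, Fintype.card_fin] at this
    exact this.trans' (by unfold colorDegree at hv; omega)
  obtain ⟨b, hb, hbS⟩ := exists_injective_mem_of_le_card hcard_b
  have hA (i : Fin k) : a i ≠ v ∧ a i ≠ u ∧ c u (a i) = m := by simpa using haS i
  have hB (j : Fin l) : (b j ≠ u ∧ b j ≠ v ∧ c v (b j) = m) ∧ ∀ i, a i ≠ b j := by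
    simpa using hbS j
  exact ⟨u, v, a, b, m, huv, ha, hb, fun i => ⟨(hA i).2.1, (hA i).1⟩,
    fun j => ⟨(hB j).1.1, (hB j).1.2.1⟩, fun i j => (hB j).2 i, rfl, fun i => (hA i).2.2,
    fun j => (hB j).1.2.2⟩

theorem stmt10_general (r n N : ℕ) (hN : (2*r-1)*n + 2 ≤ N)
    (c : Fin N → Fin N → Fin r) (hsymm : ∀ u v, c u v = c v u) :
    (∀ n1 n2 : ℕ, 1 ≤ n1 → 1 ≤ n2 → n1 + n2 = 2*n → HasMonoDoubleStar N r n1 n2 c) ∨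
    (∀ v : Fin N, ∀ i : Fin r,
      n + 1 ≤ (Finset.univ.filter (fun u => u ≠ v ∧ c v u = i)).card ∧
      (Finset.univ.filter (fun u => u ≠ v ∧ c v u = i)).card ≤ 2*n) := by
  replace hN : (2 * card (Fin r) - 1) * n + 2 ≤ card (Fin N) := by simpa using hN
  by_cases hdeg : ∀ v i, n + 1 ≤ colorDegree c v i ∧ colorDegree c v i ≤ 2 * n
  · exact Or.inr hdeg
  push Not at hdeg
  obtain ⟨v₀, i₀, hbad⟩ := hdeg
  obtain ⟨v, i, hbig⟩ : ∃ v i, 2 * n < colorDegree c v i := by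
    rcases le_or_gt (colorDegree c v₀ i₀) n with h | h
    · exact ⟨v₀, exists_colorDegree_gt_of_le hN c h⟩
    · exact ⟨v₀, i₀, hbad h⟩
  obtain ⟨x, y, hxy, hx, hy⟩ := exists_ne_lt_colorDegree_of_lt_colorDegree hN c hsymm hbig
  refine Or.inl fun n₁ n₂ _ _ hsum => ?_
  rcases le_total n₁ n₂ with h | h
  · exact hasMonoDoubleStar_of_lt_colorDegree hxy (by omega) (by omega)
  · exact (hasMonoDoubleStar_of_lt_colorDegree hxy (by omega) (by omega)).swap hsymm

/-- For `N ≥ (2r-1)n + 2`, in any `r`-coloring of `K_N` either there is a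
monochromatic copy of every double star on `2n+2` vertices, or every vertex has
degree at least `n+1` and at most `2n` in every color. -/
theorem stmt10 (r n N : ℕ) (hr : 2 ≤ r) (hn : 1 ≤ n) (hN : (2*r-1)*n + 2 ≤ N)
    (c : Fin N → Fin N → Fin r) (hsymm : ∀ u v, c u v = c v u) :
    (∀ n1 n2 : ℕ, 1 ≤ n1 → 1 ≤ n2 → n1 + n2 = 2*n → HasMonoDoubleStar N r n1 n2 c) ∨
    (∀ v : Fin N, ∀ i : Fin r,
      n + 1 ≤ (Finset.univ.filter (fun u => u ≠ v ∧ c v u = i)).card ∧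
      (Finset.univ.filter (fun u => u ≠ v ∧ c v u = i)).card ≤ 2*n) :=
  stmt10_general r n N hN c hsymm
end

section
/- Fix integers r ≥ 2, n ≥ 1, N ≥ rn+1 and an r-coloring of the edges of the complete bipartite graph K_{N,N} with parts X and Y that contains no monochromatic copy of S_{n,n}. For i ∈ {1,...,r} let z_i be the number of vertices of X ∪ Y that receive exactly i colors, and let e* be the number of important edges. Then n · ∑_{i=2}^{r} z_i ≤ 2(r-1)nN - 2N² + e*. -/
/-!
A vertex whose incident edges have colour function `f` and which receives the set `R` of
colours has at least `N - (r - |R|) n` edges whose colour it receives, since every colour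
outside `R` occurs at most `n` times at it. As `|R| ≥ 1`, and `|R| ≥ 2` for the vertices counted
by `∑_{i ≥ 2} z_i`, summing over both parts gives the bound with `e*` replaced by the number of
pairs (vertex, incident edge whose colour the vertex receives). The two counts agree because
no edge has its colour received by both endpoints: such an edge would be the middle edge of a
monochromatic `S_{n,n}`.
-/

/-- A monochromatic copy of the double star `S_{k,l}` in an `r`-coloring `c` of the
edges of the complete bipartite graph `K_{N,N}` with parts `X = Fin N` (first argument
of `c`) and `Y = Fin N` (second argument). -/
def BipHasMonoDoubleStar (N r k l : ℕ) (c : Fin N → Fin N → Fin r) : Prop :=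
  ∃ (u v : Fin N) (a : Fin k → Fin N) (b : Fin l → Fin N) (col : Fin r),
    Function.Injective a ∧ Function.Injective b ∧
    (∀ i, a i ≠ v) ∧ (∀ j, b j ≠ u) ∧
    c u v = col ∧ (∀ i, c u (a i) = col) ∧ (∀ j, c (b j) v = col)

/-- The number of edges of color `i` incident to the vertex `x ∈ X`. -/
def dX (N r : ℕ) (c : Fin N → Fin N → Fin r) (i : Fin r) (x : Fin N) : ℕ :=
  (Finset.univ.filter (fun y => c x y = i)).card

/-- The number of edges of color `i` incident to the vertex `y ∈ Y`. -/
def dY (N r : ℕ) (c : Fin N → Fin N → Fin r) (i : Fin r) (y : Fin N) : ℕ :=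
  (Finset.univ.filter (fun x => c x y = i)).card

/-- `x_i`: the number of vertices of `X` whose unique received color is `i`
(a vertex receives color `j` if it is incident to at least `n+1` edges of color `j`). -/
def xcount (n N r : ℕ) (c : Fin N → Fin N → Fin r) (i : Fin r) : ℕ :=
  (Finset.univ.filter (fun x : Fin N =>
    n + 1 ≤ dX N r c i x ∧ ∀ j : Fin r, n + 1 ≤ dX N r c j x → j = i)).card

/-- `y_i`: the number of vertices of `Y` whose unique received color is `i`. -/
def ycount (n N r : ℕ) (c : Fin N → Fin N → Fin r) (i : Fin r) : ℕ :=
  (Finset.univ.filter (fun y : Fin N =>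
    n + 1 ≤ dY N r c i y ∧ ∀ j : Fin r, n + 1 ≤ dY N r c j y → j = i)).card

/-- `z_i`: the number of vertices of `X ∪ Y` receiving exactly `i` colors. -/
def zcount (n N r : ℕ) (c : Fin N → Fin N → Fin r) (i : ℕ) : ℕ :=
  (Finset.univ.filter (fun x : Fin N =>
    (Finset.univ.filter (fun j : Fin r => n + 1 ≤ dX N r c j x)).card = i)).card +
  (Finset.univ.filter (fun y : Fin N =>
    (Finset.univ.filter (fun j : Fin r => n + 1 ≤ dY N r c j y)).card = i)).card

/-- `e*`: the number of important edges, i.e. edges whose color is received by at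
least one of its endpoints. -/
def estar (n N r : ℕ) (c : Fin N → Fin N → Fin r) : ℕ :=
  (Finset.univ.filter (fun p : Fin N × Fin N =>
    n + 1 ≤ dX N r c (c p.1 p.2) p.1 ∨ n + 1 ≤ dY N r c (c p.1 p.2) p.2)).card

open Finset

theorem exists_injective_fin_forall_mem {γ : Type*} {k : ℕ} {s : Finset γ} (h : k ≤ #s) :
    ∃ a : Fin k → γ, Function.Injective a ∧ ∀ i, a i ∈ s := by
  obtain ⟨e⟩ := Function.Embedding.nonempty_of_card_le (α := Fin k) (β := s) (by simpa using h)
  exact ⟨fun i => e i, Subtype.val_injective.comp e.injective, fun i => (e i).2⟩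

theorem sum_Icc_card_filter_eq_card_filter_le {α : Type*} [Fintype α] (t : α → ℕ) {k m : ℕ}
    (ht : ∀ a, t a ≤ m) : ∑ i ∈ Icc k m, #(univ.filter fun a => t a = i) =
      #(univ.filter fun a => k ≤ t a) := by
  rw [sum_card_fiberwise_eq_card_filter]
  congr 1
  ext a
  simp [ht a]

section ReceivedColors

variable {α β κ : Type*} [Fintype α] [Fintype β] [Fintype κ] [DecidableEq κ]

/-- A vertex is modelled by the colouring `f` of its incident edges. -/
def receivedColors (n : ℕ) (f : β → κ) : Finset κ :=
  univ.filter fun j => n + 1 ≤ #(univ.filter fun y => f y = j)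

def importantAt (n : ℕ) (f : β → κ) : Finset β :=
  univ.filter fun y => n + 1 ≤ #(univ.filter fun y' => f y' = f y)

theorem card_importantAt (n : ℕ) (f : β → κ) :
    #(importantAt n f) = ∑ j ∈ receivedColors n f, #(univ.filter fun y => f y = j) := by
  rw [sum_card_fiberwise_eq_card_filter]
  simp [importantAt, receivedColors]

theorem card_add_mul_card_receivedColors_le (n : ℕ) (f : β → κ) :
    Fintype.card β + n * #(receivedColors n f) ≤ #(importantAt n f) + Fintype.card κ * n := by
  set R := receivedColors n f
  have h_total : ∑ j ∈ R, #(univ.filter fun y => f y = j) +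
      ∑ j ∈ Rᶜ, #(univ.filter fun y => f y = j) = Fintype.card β := by
    rw [sum_add_sum_compl, sum_card_fiberwise_eq_card_filter]
    simp
  have h_unreceived : ∑ j ∈ Rᶜ, #(univ.filter fun y => f y = j) ≤ #Rᶜ * n := by
    rw [← smul_eq_mul, ← sum_const]
    refine sum_le_sum fun j hj => ?_
    simpa [R, receivedColors, Nat.lt_succ_iff] using hj
  have h_split := card_add_card_compl R
  rw [card_importantAt]
  nlinarith

theorem receivedColors_nonempty {n : ℕ} (h : Fintype.card κ * n < Fintype.card β) (f : β → κ) :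
    (receivedColors n f).Nonempty := by
  by_contra h_empty
  rw [not_nonempty_iff_eq_empty] at h_empty
  have h_le := card_add_mul_card_receivedColors_le n f
  rw [card_importantAt, h_empty] at h_le
  simp at h_le
  omega

theorem sum_card_importantAt_ge {n : ℕ} (h : Fintype.card κ * n < Fintype.card β)
    (g : α → β → κ) :
    Fintype.card α * Fintype.card β + n * Fintype.card α +
        n * #(univ.filter fun a => 2 ≤ #(receivedColors n (g a))) ≤
      ∑ a, #(importantAt n (g a)) + Fintype.card α * (Fintype.card κ * n) := by
  have h_vertex : ∀ a, Fintype.card β + n * (1 + if 2 ≤ #(receivedColors n (g a)) then 1 else 0)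
      ≤ #(importantAt n (g a)) + Fintype.card κ * n := by
    intro a
    have h_pos := (receivedColors_nonempty h (g a)).card_pos
    have h_le := card_add_mul_card_receivedColors_le n (g a)
    split_ifs <;> nlinarith
  have h_sum := sum_le_sum fun a (_ : a ∈ univ) => h_vertex a
  simp only [sum_add_distrib, ← mul_sum, sum_const, card_univ, smul_eq_mul, ← card_filter] at h_sum
  linarith

end ReceivedColors

section DoubleStar

variable {N r n : ℕ} {c : Fin N → Fin N → Fin r}

theorem bipHasMonoDoubleStar_of_mem_importantAt {u v : Fin N}
    (hu : v ∈ importantAt n (c u)) (hv : u ∈ importantAt n (fun x => c x v)) :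
    BipHasMonoDoubleStar N r n n c := by
  simp only [importantAt, mem_filter, mem_univ, true_and] at hu hv
  have hA : n ≤ #((univ.filter fun y => c u y = c u v).erase v) := by
    rw [card_erase_of_mem (by simp)]; omega
  have hB : n ≤ #((univ.filter fun x => c x v = c u v).erase u) := by
    rw [card_erase_of_mem (by simp)]; omega
  obtain ⟨a, ha_inj, ha_mem⟩ := exists_injective_fin_forall_mem hA
  obtain ⟨b, hb_inj, hb_mem⟩ := exists_injective_fin_forall_mem hB
  refine ⟨u, v, a, b, c u v, ha_inj, hb_inj, fun i => ne_of_mem_erase (ha_mem i),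
    fun j => ne_of_mem_erase (hb_mem j), rfl, fun i => ?_, fun j => ?_⟩
  · simpa using mem_of_mem_erase (ha_mem i)
  · simpa using mem_of_mem_erase (hb_mem j)

theorem estar_eq_sum_card_importantAt (hno : ¬ BipHasMonoDoubleStar N r n n c) :
    estar n N r c = ∑ x, #(importantAt n (c x)) + ∑ y, #(importantAt n (fun x => c x y)) := by
  have h_disj : Disjoint
      (univ.filter fun p : Fin N × Fin N => p.2 ∈ importantAt n (c p.1))
      (univ.filter fun p : Fin N × Fin N => p.1 ∈ importantAt n (fun x => c x p.2)) :=
    disjoint_filter.2 fun p _ hu hv => hno (bipHasMonoDoubleStar_of_mem_importantAt hu hv)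
  have h_estar : estar n N r c = #((univ.filter fun p : Fin N × Fin N =>
      p.2 ∈ importantAt n (c p.1)) ∪
      univ.filter fun p : Fin N × Fin N => p.1 ∈ importantAt n (fun x => c x p.2)) := by
    rw [← filter_or]
    simp [estar, importantAt, dX, dY]
  rw [h_estar, card_union_of_disjoint h_disj, card_filter, card_filter,
    Fintype.sum_prod_type, Fintype.sum_prod_type_right]
  simp only [← card_filter, filter_mem_eq_inter, univ_inter]

end DoubleStar

theorem sum_Icc_two_zcount (n N r : ℕ) (c : Fin N → Fin N → Fin r) :
    ∑ i ∈ Icc 2 r, zcount n N r c i =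
      #(univ.filter fun x => 2 ≤ #(receivedColors n (c x))) +
        #(univ.filter fun y => 2 ≤ #(receivedColors n (fun x => c x y))) := by
  have h_bound : ∀ f : Fin N → Fin r, #(receivedColors n f) ≤ r :=
    fun f => (card_le_univ _).trans_eq (Fintype.card_fin r)
  simp only [zcount, sum_add_distrib]
  exact congrArg₂ (· + ·)
    (sum_Icc_card_filter_eq_card_filter_le (fun x => #(receivedColors n (c x))) fun x => h_bound _)
    (sum_Icc_card_filter_eq_card_filter_le (fun y => #(receivedColors n (fun x => c x y)))
      fun y => h_bound _)

theorem stmt14_general (r n N : ℕ) (hN : r * n + 1 ≤ N)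
    (c : Fin N → Fin N → Fin r) (hno : ¬ BipHasMonoDoubleStar N r n n c) :
    (n : ℤ) * ∑ i ∈ Finset.Icc 2 r, (zcount n N r c i : ℤ) ≤
      2 * ((r : ℤ) - 1) * n * N - 2 * (N : ℤ)^2 + estar n N r c := by
  have h_card : Fintype.card (Fin r) * n < Fintype.card (Fin N) := by simpa using hN
  have hX := sum_card_importantAt_ge h_card c
  have hY := sum_card_importantAt_ge h_card fun y x => c x y
  simp only [Fintype.card_fin] at hX hY
  rw [← Nat.cast_sum, sum_Icc_two_zcount, estar_eq_sum_card_importantAt hno]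
  have hXℤ := (Nat.cast_le (α := ℤ)).mpr hX
  have hYℤ := (Nat.cast_le (α := ℤ)).mpr hY
  push_cast at hXℤ hYℤ ⊢
  linarith

/-- Claim on doubly-colored vertices: `n ∑_{i=2}^{r} z_i ≤ 2(r-1)nN - 2N² + e*`. -/
theorem stmt14 (r n N : ℕ) (hr : 2 ≤ r) (hn : 1 ≤ n) (hN : r * n + 1 ≤ N)
    (c : Fin N → Fin N → Fin r) (hno : ¬ BipHasMonoDoubleStar N r n n c) :
    (n : ℤ) * ∑ i ∈ Finset.Icc 2 r, (zcount n N r c i : ℤ) ≤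
      2 * ((r : ℤ) - 1) * n * N - 2 * (N : ℤ)^2 + estar n N r c :=
  stmt14_general r n N hN c hno
end

section
/- Fix integers r ≥ 2, n ≥ 1, N ≥ rn+1 and an r-coloring of the edges of the complete bipartite graph K_{N,N} with parts X and Y that contains no monochromatic copy of S_{n,n}. For i ∈ {1,...,r} let x_i (resp. y_i) be the number of vertices of X (resp. Y) whose unique received color is i, let e* be the number of important edges, and let σ = sqrt(N² - e*)/N (so σ² N² is the number of non-important edges). Let C > 0 be a real number and let t be the number of indices i ∈ {1,...,r} with max(x_i, y_i) ≥ σN/C. Then ∑_{i=1}^{r} (x_i + y_i) ≤ (t·n·N)/(N - (r-1)n) + (r - t)·σN/C + C·σ·N. -/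
/-- `σ`, where `σ²N²` is the number of non-important edges: `σ = √(N² - e*)/N`. -/
noncomputable def sigmaBip (n N r : ℕ) (c : Fin N → Fin N → Fin r) : ℝ :=
  Real.sqrt ((N : ℝ)^2 - (estar n N r c : ℝ)) / N

open Classical in
/-- `t`: the number of colors `i` with `max{x_i, y_i} ≥ σN/C`. -/
noncomputable def tcount (n N r : ℕ) (c : Fin N → Fin N → Fin r) (C : ℝ) : ℕ :=
  (Finset.univ.filter (fun i : Fin r =>
    sigmaBip n N r c * N / C ≤ (max (xcount n N r c i) (ycount n N r c i) : ℕ))).card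

open Finset

/-- The set `X_i`; the set `Y_i` is `uniqueColorSet n N r (Function.swap c) i`. -/
def uniqueColorSet (n N r : ℕ) (c : Fin N → Fin N → Fin r) (i : Fin r) : Finset (Fin N) :=
  univ.filter fun x => n + 1 ≤ dX N r c i x ∧ ∀ j : Fin r, n + 1 ≤ dX N r c j x → j = i

lemma xcount_eq_card (n N r : ℕ) (c : Fin N → Fin N → Fin r) (i : Fin r) :
    xcount n N r c i = #(uniqueColorSet n N r c i) := rfl

lemma ycount_eq_xcount_swap (n N r : ℕ) (c : Fin N → Fin N → Fin r) (i : Fin r) :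
    ycount n N r c i = xcount n N r (Function.swap c) i := rfl

lemma bipHasMonoDoubleStar_swap {N r k l : ℕ} {c : Fin N → Fin N → Fin r} :
    BipHasMonoDoubleStar N r l k (Function.swap c) ↔ BipHasMonoDoubleStar N r k l c := by
  constructor <;>
  · rintro ⟨u, v, a, b, col, ha, hb, hav, hbu, huv, hua, hbv⟩
    exact ⟨v, u, b, a, col, hb, ha, hbu, hav, huv, hbv, hua⟩

lemma exists_injective_mem_ne {α : Type*} [DecidableEq α] {s : Finset α} {n : ℕ}
    (hs : n + 1 ≤ #s) (a : α) :
    ∃ f : Fin n → α, Function.Injective f ∧ ∀ k, f k ∈ s ∧ f k ≠ a := by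
  obtain ⟨t, hts, htn⟩ := exists_subset_card_eq (s := s.erase a) (n := n)
    (by have := pred_card_le_card_erase (s := s) (a := a); omega)
  let e : Fin n ≃ t := (finCongr htn.symm).trans t.equivFin.symm
  refine ⟨fun k => e k, Subtype.val_injective.comp e.injective, fun k => ?_⟩
  have := hts (e k).2
  exact ⟨mem_of_mem_erase this, ne_of_mem_erase this⟩

lemma bipHasMonoDoubleStar_of_receives {n N r : ℕ} (c : Fin N → Fin N → Fin r) {u v : Fin N}
    {i : Fin r} (huv : c u v = i) (hu : n + 1 ≤ dX N r c i u) (hv : n + 1 ≤ dY N r c i v) :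
    BipHasMonoDoubleStar N r n n c := by
  obtain ⟨a, ha, hav⟩ := exists_injective_mem_ne hu v
  obtain ⟨b, hb, hbu⟩ := exists_injective_mem_ne hv u
  exact ⟨u, v, a, b, i, ha, hb, fun k => (hav k).2, fun k => (hbu k).2, huv,
    fun k => (mem_filter.1 (hav k).1).2, fun k => (mem_filter.1 (hbu k).1).2⟩

lemma sum_dX (N r : ℕ) (c : Fin N → Fin N → Fin r) (u : Fin N) :
    ∑ j, dX N r c j u = N := by
  simpa [dX] using (card_eq_sum_card_fiberwise (s := univ) (t := univ) (f := c u)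
    fun _ _ => mem_coe.2 (mem_univ _)).symm

lemma le_dX_add_of_unique {n N r : ℕ} (c : Fin N → Fin N → Fin r) {i : Fin r} {u : Fin N}
    (hu : ∀ j : Fin r, n + 1 ≤ dX N r c j u → j = i) :
    N ≤ dX N r c i u + (r - 1) * n := by
  have hle : ∀ j ∈ univ.erase i, dX N r c j u ≤ n := fun j hj => by
    by_contra! h
    exact (ne_of_mem_erase hj) (hu j h)
  calc N = dX N r c i u + ∑ j ∈ univ.erase i, dX N r c j u := by
        rw [add_sum_erase _ (fun j => dX N r c j u) (mem_univ i), sum_dX]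
    _ ≤ dX N r c i u + (r - 1) * n := by
        grw [sum_le_card_nsmul _ _ n hle]
        simp [card_erase_of_mem]

section NoMonoDoubleStar

variable {n N r : ℕ} {c : Fin N → Fin N → Fin r} (hno : ¬ BipHasMonoDoubleStar N r n n c)
include hno

lemma card_uniqueColorSet_mul_le (i : Fin r) :
    #(uniqueColorSet n N r c i) * N ≤ n * N + #(uniqueColorSet n N r c i) * ((r - 1) * n) := by
  set X := uniqueColorSet n N r c i
  have hcol : ∀ y, #{u ∈ X | c u y = i} ≤ n := fun y => by
    by_contra! h
    obtain ⟨u, hu⟩ := card_pos.1 (by omega : 0 < #{u ∈ X | c u y = i})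
    rw [mem_filter] at hu
    exact hno (bipHasMonoDoubleStar_of_receives c hu.2 (mem_filter.1 hu.1).2.1
      (h.trans_le (card_le_card (filter_subset_filter _ (subset_univ X)))))
  calc #X * N ≤ ∑ u ∈ X, (dX N r c i u + (r - 1) * n) :=
        card_nsmul_le_sum _ _ _ fun u hu => le_dX_add_of_unique c (mem_filter.1 hu).2.2
    _ = ∑ y, #{u ∈ X | c u y = i} + #X * ((r - 1) * n) := by
        rw [sum_add_distrib, sum_const, smul_eq_mul]
        simp only [dX, card_filter]
        rw [sum_comm]
    _ ≤ n * N + #X * ((r - 1) * n) := by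
        grw [sum_le_card_nsmul _ _ n fun y _ => hcol y]
        simp [mul_comm]

lemma xcount_le_div (hD : 0 < (N : ℝ) - (r - 1) * n) (i : Fin r) :
    (xcount n N r c i : ℝ) ≤ n * N / (N - (r - 1) * n) := by
  have h := card_uniqueColorSet_mul_le hno i
  rw [← xcount_eq_card] at h
  rw [le_div_iff₀ hD]
  have : ((xcount n N r c i * N : ℕ) : ℝ) ≤ ((n * N + xcount n N r c i * ((r - 1) * n) : ℕ) : ℝ) :=
    by exact_mod_cast h
  push_cast [Nat.cast_sub (Nat.one_le_of_lt i.isLt)] at this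
  linear_combination this

lemma ycount_le_div (hD : 0 < (N : ℝ) - (r - 1) * n) (i : Fin r) :
    (ycount n N r c i : ℝ) ≤ n * N / (N - (r - 1) * n) :=
  xcount_le_div (bipHasMonoDoubleStar_swap.not.2 hno) hD i

lemma estar_add_sum_mul_le : estar n N r c + ∑ i, xcount n N r c i * ycount n N r c i ≤ N * N := by
  set E : Fin r → Finset (Fin N × Fin N) := fun i =>
    uniqueColorSet n N r c i ×ˢ uniqueColorSet n N r (Function.swap c) i
  have hdisj : ((univ : Finset (Fin r)) : Set (Fin r)).PairwiseDisjoint E := fun i _ j _ hij =>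
    disjoint_left.2 fun p hi hj =>
      hij ((mem_filter.1 (mem_product.1 hj).1).2.2 i (mem_filter.1 (mem_product.1 hi).1).2.1)
  have hsub : univ.biUnion E ⊆ univ.filter fun p : Fin N × Fin N =>
      ¬ (n + 1 ≤ dX N r c (c p.1 p.2) p.1 ∨ n + 1 ≤ dY N r c (c p.1 p.2) p.2) := by
    intro p hp
    obtain ⟨i, -, hpi⟩ := mem_biUnion.1 hp
    obtain ⟨hx, hy⟩ := mem_product.1 hpi
    obtain ⟨hxi, hxu⟩ := (mem_filter.1 hx).2
    obtain ⟨hyi, hyu⟩ := (mem_filter.1 hy).2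
    refine mem_filter.2 ⟨mem_univ _, ?_⟩
    rintro (h | h)
    · exact hno (bipHasMonoDoubleStar_of_receives c (hxu _ h) hxi hyi)
    · exact hno (bipHasMonoDoubleStar_of_receives c (hyu _ h) hxi hyi)
  have hsum : ∑ i, xcount n N r c i * ycount n N r c i = #(univ.biUnion E) := by
    rw [card_biUnion hdisj]
    simp [E, card_product, xcount_eq_card, ycount_eq_xcount_swap]
  rw [hsum, estar]
  grw [card_le_card hsub, card_filter_add_card_filter_not]
  simp

lemma sum_mul_le_sq_sigmaBip :
    ∑ i, (xcount n N r c i : ℝ) * ycount n N r c i ≤ (sigmaBip n N r c * N) ^ 2 := by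
  have h : (estar n N r c : ℝ) + ∑ i, (xcount n N r c i : ℝ) * ycount n N r c i ≤ N * N := by
    exact_mod_cast estar_add_sum_mul_le hno
  have he : (0 : ℝ) ≤ estar n N r c := Nat.cast_nonneg _
  have hs : (0 : ℝ) ≤ ∑ i, (xcount n N r c i : ℝ) * ycount n N r c i := by positivity
  rcases N.eq_zero_or_pos with rfl | hN
  · simp at h ⊢
    linarith
  rw [sigmaBip, div_mul_cancel₀ _ (by positivity), Real.sq_sqrt (by linarith)]
  linarith

end NoMonoDoubleStar

/-- The alternative `x * y = 0` covers `B = 0`, where `x * y / B = 0`. -/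
lemma add_le_ite_add_mul_div {A B x y : ℝ} (hx : 0 ≤ x) (hy : 0 ≤ y) (hxA : x ≤ A) (hyA : y ≤ A)
    (hB : 0 < B ∨ x * y = 0) :
    x + y ≤ (if B ≤ max x y then A else B) + x * y / B := by
  split_ifs with hmax
  · have hmin : min x y ≤ x * y / B := by
      rcases hB with hB | hxy
      · rw [le_div_iff₀ hB, ← min_mul_max x y]
        exact mul_le_mul_of_nonneg_left hmax (le_min hx hy)
      · rw [hxy, zero_div]
        rcases mul_eq_zero.mp hxy with h | h <;> simp [h, hx, hy]
    linarith [min_add_max x y, max_le hxA hyA]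
  · rw [not_le] at hmax
    have hB : 0 < B := (le_max_of_le_left hx).trans_lt hmax
    rw [← sub_le_iff_le_add', le_div_iff₀ hB]
    nlinarith [mul_nonneg (sub_nonneg.2 (le_of_max_le_left hmax.le))
      (sub_nonneg.2 (le_of_max_le_right hmax.le))]

lemma sum_add_le_of_sum_mul_le_sq {ι : Type*} (s : Finset ι) (x y : ι → ℝ) {A P C : ℝ}
    (hx : ∀ i ∈ s, 0 ≤ x i) (hy : ∀ i ∈ s, 0 ≤ y i) (hxA : ∀ i ∈ s, x i ≤ A)
    (hyA : ∀ i ∈ s, y i ≤ A) (hC : 0 < C) (hP : 0 ≤ P) (hxy : ∑ i ∈ s, x i * y i ≤ P ^ 2) :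
    ∑ i ∈ s, (x i + y i) ≤ #{i ∈ s | P / C ≤ max (x i) (y i)} * A
      + (#s - #{i ∈ s | P / C ≤ max (x i) (y i)}) * (P / C) + C * P := by
  have hxy0 : ∀ i ∈ s, 0 ≤ x i * y i := fun i hi => mul_nonneg (hx i hi) (hy i hi)
  have hB : ∀ i ∈ s, 0 < P / C ∨ x i * y i = 0 := fun i hi => by
    rcases hP.eq_or_lt with rfl | hP
    · exact .inr <| le_antisymm ((single_le_sum hxy0 hi).trans (by simpa using hxy)) (hxy0 i hi)
    · exact .inl (div_pos hP hC)
  have hcard := card_filter_add_card_filter_not (s := s) (fun i => P / C ≤ max (x i) (y i))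
  calc ∑ i ∈ s, (x i + y i)
      ≤ ∑ i ∈ s, ((if P / C ≤ max (x i) (y i) then A else P / C) + x i * y i / (P / C)) :=
        sum_le_sum fun i hi =>
          add_le_ite_add_mul_div (hx i hi) (hy i hi) (hxA i hi) (hyA i hi) (hB i hi)
    _ = #{i ∈ s | P / C ≤ max (x i) (y i)} * A
          + (#s - #{i ∈ s | P / C ≤ max (x i) (y i)}) * (P / C)
          + (∑ i ∈ s, x i * y i) / (P / C) := by
        rw [sum_add_distrib, sum_ite, sum_const, sum_const, ← sum_div, nsmul_eq_mul,
          nsmul_eq_mul, ← hcard]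
        push_cast
        ring
    _ ≤ _ := by
        gcongr
        refine div_le_of_le_mul₀ (by positivity) (by positivity) (hxy.trans_eq ?_)
        field_simp

theorem stmt16_general (r n N : ℕ) (hN : r * n + 1 ≤ N)
    (c : Fin N → Fin N → Fin r) (hno : ¬ BipHasMonoDoubleStar N r n n c)
    (C : ℝ) (hC : 0 < C) :
    ∑ i : Fin r, ((xcount n N r c i : ℝ) + (ycount n N r c i : ℝ)) ≤
      (tcount n N r c C : ℝ) * n * N / ((N : ℝ) - ((r : ℝ) - 1) * n)
      + ((r : ℝ) - (tcount n N r c C : ℝ)) * (sigmaBip n N r c) * N / C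
      + C * (sigmaBip n N r c) * N := by
  have hD : 0 < (N : ℝ) - (r - 1) * n := by
    have : ((r * n + 1 : ℕ) : ℝ) ≤ N := by exact_mod_cast hN
    push_cast at this
    linarith
  have hσ : 0 ≤ sigmaBip n N r c * N := by unfold sigmaBip; positivity
  have key := sum_add_le_of_sum_mul_le_sq univ (fun i => (xcount n N r c i : ℝ))
    (fun i => (ycount n N r c i : ℝ)) (fun _ _ => by positivity) (fun _ _ => by positivity)
    (fun i _ => xcount_le_div hno hD i) (fun i _ => ycount_le_div hno hD i) hC hσ
    (sum_mul_le_sq_sigmaBip hno)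
  have ht : #{i ∈ (univ : Finset (Fin r)) | sigmaBip n N r c * N / C ≤
      max (xcount n N r c i : ℝ) (ycount n N r c i)} = tcount n N r c C := by
    simp only [tcount, Nat.cast_max]
  rw [ht, card_univ, Fintype.card_fin] at key
  linear_combination key

/-- Claim `bigC`: `z_1 = ∑_i (x_i + y_i) ≤ tnN/(N-(r-1)n) + (r-t)σN/C + CσN`. -/
theorem stmt16 (r n N : ℕ) (hr : 2 ≤ r) (hn : 1 ≤ n) (hN : r * n + 1 ≤ N)
    (c : Fin N → Fin N → Fin r) (hno : ¬ BipHasMonoDoubleStar N r n n c)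
    (C : ℝ) (hC : 0 < C) :
    ∑ i : Fin r, ((xcount n N r c i : ℝ) + (ycount n N r c i : ℝ)) ≤
      (tcount n N r c C : ℝ) * n * N / ((N : ℝ) - ((r : ℝ) - 1) * n)
      + ((r : ℝ) - (tcount n N r c C : ℝ)) * (sigmaBip n N r c) * N / C
      + C * (sigmaBip n N r c) * N :=
  stmt16_general r n N hN c hno C hC
end
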